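/- Let D = (V,A) be a DAG, let A' ⊆ A be a minimum-cardinality arc set such that D − A' is a funnel, and let L* be a funnel labeling of D − A'. Then every arc set B obtained from D and L* by the satisfaction rule has |B| = |A'|. -/

import Mathlib

/-!
Deleting `B` leaves `L` a funnel labeling of `A \ B`, and a digraph with a funnel labeling
is a funnel, so `|A'| ≤ |B|` by minimality of `A'`. Conversely, an arc set `C ⊆ A` on which
`L` is a funnel labeling has at most one arc leaving each Merge vertex, at most one arc
entering each Fork vertex and no Merge→Fork arc, whereas `A \ B` keeps an arc leaving every
Merge vertex with a Merge out-neighbour, an arc entering every Fork vertex with a Fork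
in-neighbour, and every Fork→Merge arc. Charging each arc to its Merge tail, else its Fork
head, else to itself (`arcAnchor`) gives `|A \ A'| ≤ |A \ B|`.
-/

variable {V : Type*} [Fintype V] [DecidableEq V]

/-- Arc adjacency of a digraph given by its finite arc set. -/
def ArcAdj (A : Finset (V × V)) : V → V → Prop := fun u v => (u, v) ∈ A

/-- A digraph is a DAG if it contains no directed cycle. -/
def IsDAG (A : Finset (V × V)) : Prop := ∀ v : V, ¬ Relation.TransGen (ArcAdj A) v v

/-- Indegree of a vertex. -/
def inDeg (A : Finset (V × V)) (v : V) : ℕ := (A.filter fun e => e.2 = v).card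

/-- Outdegree of a vertex. -/
def outDeg (A : Finset (V × V)) (v : V) : ℕ := (A.filter fun e => e.1 = v).card

/-- A source is a vertex of indegree 0. -/
def IsSource (A : Finset (V × V)) (v : V) : Prop := inDeg A v = 0

/-- A sink is a vertex of outdegree 0. -/
def IsSink (A : Finset (V × V)) (v : V) : Prop := outDeg A v = 0

/-- The arcs (consecutive pairs of vertices) of a path given as a list of vertices. -/
def arcsOf (p : List V) : List (V × V) := p.zip p.tail

/-- A source-sink path: a directed path (with at least one arc) starting at a
source and ending at a sink. -/
def IsSourceSinkPath (A : Finset (V × V)) (p : List V) : Prop :=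
  2 ≤ p.length ∧ List.Chain' (ArcAdj A) p ∧ p.Nodup ∧
  (∃ s, p.head? = some s ∧ IsSource A s) ∧
  (∃ t, p.getLast? = some t ∧ IsSink A t)

/-- An arc is private if exactly one source-sink path contains it. -/
def IsPrivate (A : Finset (V × V)) (e : V × V) : Prop :=
  ∃! p : List V, IsSourceSinkPath A p ∧ e ∈ arcsOf p

/-- A funnel: every source-sink path contains at least one private arc. -/
def IsFunnel (A : Finset (V × V)) : Prop :=
  ∀ p : List V, IsSourceSinkPath A p → ∃ e ∈ arcsOf p, IsPrivate A e

/-- The arc-deletion distance to a funnel: the minimum number of arcs whose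
deletion turns the digraph into a funnel. -/
noncomputable def funnelDist (A : Finset (V × V)) : ℕ :=
  sInf {k | ∃ B ⊆ A, B.card = k ∧ IsFunnel (A \ B)}

/-- Vertex labels for funnel labelings. -/
inductive Label : Type where
  | fork
  | merge
deriving DecidableEq

/-- A funnel labeling: Fork vertices have indegree at most 1, Merge vertices have
outdegree at most 1, and no arc goes from a Merge vertex to a Fork vertex. -/
def FunnelLabeling (A : Finset (V × V)) (L : V → Label) : Prop :=
  (∀ v, L v = Label.fork → inDeg A v ≤ 1) ∧
  (∀ v, L v = Label.merge → outDeg A v ≤ 1) ∧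
  ∀ v u, (v, u) ∈ A → ¬(L v = Label.merge ∧ L u = Label.fork)

/-- The out-arcs of a vertex. -/
def outArcs (A : Finset (V × V)) (v : V) : Finset (V × V) := A.filter fun e => e.1 = v

/-- The in-arcs of a vertex. -/
def inArcs (A : Finset (V × V)) (v : V) : Finset (V × V) := A.filter fun e => e.2 = v

/-- The set `S` is a valid contribution of vertex `v` to the satisfaction rule:
if `L v = Merge`, all out-arcs of `v` except one chosen arc to a Merge
out-neighbor if one exists, and all out-arcs otherwise; symmetrically for
`L v = Fork` with in-arcs. -/
def SatRuleAt (A : Finset (V × V)) (L : V → Label) (v : V) (S : Finset (V × V)) : Prop :=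
  (L v = Label.merge ∧
    ((∃ u, (v, u) ∈ A ∧ L u = Label.merge ∧ S = (outArcs A v).erase (v, u)) ∨
     ((∀ u, (v, u) ∈ A → L u ≠ Label.merge) ∧ S = outArcs A v))) ∨
  (L v = Label.fork ∧
    ((∃ u, (u, v) ∈ A ∧ L u = Label.fork ∧ S = (inArcs A v).erase (u, v)) ∨
     ((∀ u, (u, v) ∈ A → L u ≠ Label.fork) ∧ S = inArcs A v)))

/-- `B` is an arc set obtained from `D` and `L` by the satisfaction rule:
the union over all vertices of their contributions. -/
def SatRule (A : Finset (V × V)) (L : V → Label) (B : Finset (V × V)) : Prop :=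
  ∃ f : V → Finset (V × V), (∀ v, SatRuleAt A L v (f v)) ∧ B = Finset.univ.biUnion f

theorem mem_arcsOf_iff {α : Type*} {p : List α} {x y : α} :
    (x, y) ∈ arcsOf p ↔ ∃ a b, p = a ++ x :: y :: b := by
  induction p with
  | nil => simp [arcsOf]
  | cons z r ih =>
    cases r with
    | nil =>
      simp only [arcsOf, List.tail_cons, List.zip_nil_right, List.not_mem_nil, false_iff]
      rintro ⟨a, b, h⟩
      have := congrArg List.length h
      simp only [List.length_append, List.length_cons, List.length_nil] at this
      omega
    | cons w r =>
      change (x, y) ∈ (z, w) :: arcsOf (w :: r) ↔ _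
      rw [List.mem_cons, ih]
      constructor
      · rintro (h | ⟨a, b, h⟩)
        · obtain ⟨rfl, rfl⟩ := Prod.mk.inj h
          exact ⟨[], r, rfl⟩
        · exact ⟨z :: a, b, by rw [h]; rfl⟩
      · rintro ⟨_ | ⟨c, a⟩, b, h⟩
        · simp_all
        · simp only [List.cons_append, List.cons.injEq] at h
          exact Or.inr ⟨a, b, h.2⟩

theorem List.exists_append_cons_cons_of_head_getLast {α : Type*} {P Q : α → Prop} :
    ∀ l : List α, 2 ≤ l.length → (∀ s ∈ l.head?, P s) → (∀ t ∈ l.getLast?, Q t) →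
      (∀ z ∈ l, P z ∨ Q z) → ∃ a x y b, l = a ++ x :: y :: b ∧ P x ∧ Q y
  | x :: y :: r, _, hhead, hlast, hPQ => by
    by_cases hy : Q y
    · exact ⟨[], x, y, r, rfl, hhead x rfl, hy⟩
    obtain ⟨z, r', rfl⟩ : ∃ z r', r = z :: r' := by
      cases r with
      | nil => exact absurd (hlast y rfl) hy
      | cons z r' => exact ⟨z, r', rfl⟩
    obtain ⟨a, x', y', b, h, hx', hy'⟩ :=
      List.exists_append_cons_cons_of_head_getLast (y :: z :: r') (by simp)
      (by simpa using (hPQ y (by simp)).resolve_right hy)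
      (fun t ht => hlast t (by simpa using ht)) (fun w hw => hPQ w (by simp_all))
    exact ⟨x :: a, x', y', b, by rw [h]; rfl, hx', hy'⟩

theorem List.IsChain.eq_of_functional {α : Type*} {R : α → α → Prop} {Q : α → Prop}
    (hQ : ∀ x y, Q x → R x y → Q y ∧ ∀ z, R x z → z = y) :
    ∀ {x : α} {l₁ l₂ : List α}, Q x → IsChain R (x :: l₁) → IsChain R (x :: l₂) →
      (∀ t ∈ (x :: l₁).getLast?, ∀ z, ¬ R t z) → (∀ t ∈ (x :: l₂).getLast?, ∀ z, ¬ R t z) →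
      l₁ = l₂
  | _, [], [], _, _, _, _, _ => rfl
  | x, [], y :: _, _, _, h₂, hlast₁, _ => absurd (List.isChain_cons_cons.mp h₂).1 (hlast₁ x rfl y)
  | x, y :: _, [], _, h₁, _, _, hlast₂ => absurd (List.isChain_cons_cons.mp h₁).1 (hlast₂ x rfl y)
  | x, y₁ :: l₁, y₂ :: l₂, hx, h₁, h₂, hlast₁, hlast₂ => by
    obtain ⟨hxy₁, h₁⟩ := List.isChain_cons_cons.mp h₁
    obtain ⟨hxy₂, h₂⟩ := List.isChain_cons_cons.mp h₂
    obtain ⟨hy₁, hfun⟩ := hQ x y₁ hx hxy₁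
    obtain rfl := hfun y₂ hxy₂
    rw [eq_of_functional hQ hy₁ h₁ h₂ (by simpa using hlast₁) (by simpa using hlast₂)]

theorem List.IsChain.eq_of_append_cons_cons {α : Type*} {R : α → α → Prop} {P Q : α → Prop}
    (hP : ∀ x y, P x → R y x → P y ∧ ∀ z, R z x → z = y)
    (hQ : ∀ x y, Q x → R x y → Q y ∧ ∀ z, R x z → z = y)
    {x y : α} (hx : P x) (hy : Q y) {a₁ b₁ a₂ b₂ : List α}
    (h₁ : IsChain R (a₁ ++ x :: y :: b₁)) (h₂ : IsChain R (a₂ ++ x :: y :: b₂))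
    (hhead₁ : ∀ s ∈ (a₁ ++ x :: y :: b₁).head?, ∀ z, ¬ R z s)
    (hhead₂ : ∀ s ∈ (a₂ ++ x :: y :: b₂).head?, ∀ z, ¬ R z s)
    (hlast₁ : ∀ t ∈ (a₁ ++ x :: y :: b₁).getLast?, ∀ z, ¬ R t z)
    (hlast₂ : ∀ t ∈ (a₂ ++ x :: y :: b₂).getLast?, ∀ z, ¬ R t z) :
    a₁ ++ x :: y :: b₁ = a₂ ++ x :: y :: b₂ := by
  have back {a b : List α} (h : IsChain R (a ++ x :: y :: b)) :
      IsChain (flip R) (x :: a.reverse) := by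
    have h' := List.isChain_reverse.mpr (List.isChain_append_cons_cons.mp h).1
    rw [List.reverse_concat] at h'
    exact h'
  have fwd {a b : List α} (h : IsChain R (a ++ x :: y :: b)) : IsChain R (y :: b) :=
    (List.isChain_append_cons_cons.mp h).2.2
  have head_eq (a b : List α) : (x :: a.reverse).getLast? = (a ++ x :: y :: b).head? := by
    rw [← List.reverse_concat, List.getLast?_reverse]
    cases a <;> rfl
  have last_eq (a b : List α) : (y :: b).getLast? = (a ++ x :: y :: b).getLast? := by
    simp only [List.getLast?_append, List.getLast?_cons, Option.some_or, Option.getD_some]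
  have hb : b₁ = b₂ := eq_of_functional hQ hy (fwd h₁) (fwd h₂)
    (by rwa [last_eq a₁]) (by rwa [last_eq a₂])
  have ha : a₁.reverse = a₂.reverse := eq_of_functional (R := flip R) hP hx (back h₁) (back h₂)
    (by rw [head_eq a₁ b₁]; exact fun t ht z => hhead₁ t ht z)
    (by rw [head_eq a₂ b₂]; exact fun t ht z => hhead₂ t ht z)
  rw [List.reverse_inj.mp ha, hb]

section FunnelLabeling

variable {V : Type*} [DecidableEq V] {C : Finset (V × V)} {L : V → Label}

theorem not_arcAdj_of_isSink {t : V} (ht : IsSink C t) (z : V) : ¬ ArcAdj C t z := fun h =>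
  have hmem : (t, z) ∈ C.filter fun e => e.1 = t := Finset.mem_filter.mpr ⟨h, rfl⟩
  (Finset.card_pos.mpr ⟨_, hmem⟩).ne' ht

theorem not_arcAdj_of_isSource {s : V} (hs : IsSource C s) (z : V) : ¬ ArcAdj C z s := fun h =>
  have hmem : (z, s) ∈ C.filter fun e => e.2 = s := Finset.mem_filter.mpr ⟨h, rfl⟩
  (Finset.card_pos.mpr ⟨_, hmem⟩).ne' hs

theorem FunnelLabeling.eq_of_mem_of_merge (hL : FunnelLabeling C L) {u v₁ v₂ : V}
    (hu : L u = .merge) (h₁ : (u, v₁) ∈ C) (h₂ : (u, v₂) ∈ C) : v₁ = v₂ :=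
  congrArg Prod.snd (Finset.card_le_one.mp (hL.2.1 u hu) _
    (Finset.mem_filter.mpr ⟨h₁, rfl⟩) _ (Finset.mem_filter.mpr ⟨h₂, rfl⟩))

theorem FunnelLabeling.eq_of_mem_of_fork (hL : FunnelLabeling C L) {u₁ u₂ v : V}
    (hv : L v = .fork) (h₁ : (u₁, v) ∈ C) (h₂ : (u₂, v) ∈ C) : u₁ = u₂ :=
  congrArg Prod.fst (Finset.card_le_one.mp (hL.1 v hv) _
    (Finset.mem_filter.mpr ⟨h₁, rfl⟩) _ (Finset.mem_filter.mpr ⟨h₂, rfl⟩))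

theorem FunnelLabeling.succ_of_merge_or_sink (hL : FunnelLabeling C L) (x y : V)
    (hx : L x = .merge ∨ IsSink C x) (hxy : ArcAdj C x y) :
    (L y = .merge ∨ IsSink C y) ∧ ∀ z, ArcAdj C x z → z = y := by
  obtain hx | hx := hx
  · refine ⟨.inl ?_, fun z hxz => ?_⟩
    · cases hy : L y
      · exact absurd ⟨hx, hy⟩ (hL.2.2 x y hxy)
      · rfl
    · exact hL.eq_of_mem_of_merge hx hxz hxy
  · exact absurd hxy (not_arcAdj_of_isSink hx y)

theorem FunnelLabeling.pred_of_fork_or_source (hL : FunnelLabeling C L) (x y : V)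
    (hx : L x = .fork ∨ IsSource C x) (hyx : ArcAdj C y x) :
    (L y = .fork ∨ IsSource C y) ∧ ∀ z, ArcAdj C z x → z = y := by
  obtain hx | hx := hx
  · refine ⟨.inl ?_, fun z hzx => ?_⟩
    · cases hy : L y
      · rfl
      · exact absurd ⟨hy, hx⟩ (hL.2.2 y x hyx)
    · exact hL.eq_of_mem_of_fork hx hzx hyx
  · exact absurd hyx (not_arcAdj_of_isSource hx y)

/-- Every source-sink path contains an arc from a Fork-or-source vertex to a Merge-or-sink
vertex; the path is forced on both sides of such an arc, so the arc is private. -/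
theorem FunnelLabeling.isFunnel (hL : FunnelLabeling C L) : IsFunnel C := by
  intro p hp
  obtain ⟨hlen, hchain, -, ⟨s, hs, hsrc⟩, ⟨t, ht, hsink⟩⟩ := id hp
  obtain ⟨a, x, y, b, rfl, hx, hy⟩ :=
    List.exists_append_cons_cons_of_head_getLast (P := fun x => L x = .fork ∨ IsSource C x)
      (Q := fun y => L y = .merge ∨ IsSink C y) p hlen (by simp_all) (by simp_all)
      (fun z _ => by cases L z <;> simp)
  have hends {q : List V} (hq : IsSourceSinkPath C q) :
      (∀ s ∈ q.head?, ∀ z, ¬ ArcAdj C z s) ∧ (∀ t ∈ q.getLast?, ∀ z, ¬ ArcAdj C t z) := by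
    obtain ⟨-, -, -, ⟨s, hs, hsrc⟩, ⟨t, ht, hsink⟩⟩ := hq
    simp_all [not_arcAdj_of_isSource, not_arcAdj_of_isSink]
  refine ⟨(x, y), mem_arcsOf_iff.mpr ⟨a, b, rfl⟩, _, ⟨hp, mem_arcsOf_iff.mpr ⟨a, b, rfl⟩⟩, ?_⟩
  rintro q ⟨hq, hxy⟩
  obtain ⟨a', b', rfl⟩ := mem_arcsOf_iff.mp hxy
  exact List.IsChain.eq_of_append_cons_cons hL.pred_of_fork_or_source hL.succ_of_merge_or_sink
    hx hy hq.2.1 hchain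
    (hends hq).1 (hends hp).1 (hends hq).2 (hends hp).2

end FunnelLabeling

section SatRule

variable {V : Type*} [DecidableEq V] {A : Finset (V × V)} {L : V → Label}

namespace SatRuleAt

variable {v : V} {S : Finset (V × V)}

theorem subset (h : SatRuleAt A L v S) : S ⊆ A := by
  rcases h with ⟨-, ⟨u, -, -, rfl⟩ | ⟨-, rfl⟩⟩ | ⟨-, ⟨u, -, -, rfl⟩ | ⟨-, rfl⟩⟩ <;>
    intro e he <;> simp_all [outArcs, inArcs]

theorem mem_incident (h : SatRuleAt A L v S) {e : V × V} (he : e ∈ S) :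
    (L v = .merge ∧ e.1 = v) ∨ (L v = .fork ∧ e.2 = v) := by
  rcases h with ⟨hv, ⟨u, -, -, rfl⟩ | ⟨-, rfl⟩⟩ | ⟨hv, ⟨u, -, -, rfl⟩ | ⟨-, rfl⟩⟩ <;>
    simp_all [outArcs, inArcs]

theorem out_eq_of_not_mem (h : SatRuleAt A L v S) (hv : L v = .merge) :
    ∃ u, L u = .merge ∧ ∀ w, (v, w) ∈ A → (v, w) ∉ S → w = u := by
  rcases h with ⟨-, ⟨u, -, hu, rfl⟩ | ⟨-, rfl⟩⟩ | ⟨hv', -⟩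
  · exact ⟨u, hu, fun w hw hS => by simp_all [outArcs]⟩
  · exact ⟨v, hv, fun w hw hS => by simp_all [outArcs]⟩
  · simp_all

theorem in_eq_of_not_mem (h : SatRuleAt A L v S) (hv : L v = .fork) :
    ∃ u, L u = .fork ∧ ∀ w, (w, v) ∈ A → (w, v) ∉ S → w = u := by
  rcases h with ⟨hv', -⟩ | ⟨-, ⟨u, -, hu, rfl⟩ | ⟨-, rfl⟩⟩
  · simp_all
  · exact ⟨u, hu, fun w hw hS => by simp_all [inArcs]⟩
  · exact ⟨v, hv, fun w hw hS => by simp_all [inArcs]⟩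

theorem exists_out_not_mem (h : SatRuleAt A L v S) (hv : L v = .merge) {w : V}
    (hvw : (v, w) ∈ A) (hw : L w = .merge) : ∃ u, (v, u) ∈ A ∧ L u = .merge ∧ (v, u) ∉ S := by
  rcases h with ⟨-, ⟨u, hvu, hu, rfl⟩ | ⟨hno, -⟩⟩ | ⟨hv', -⟩
  · exact ⟨u, hvu, hu, Finset.notMem_erase _ _⟩
  · exact absurd hw (hno w hvw)
  · simp_all

theorem exists_in_not_mem (h : SatRuleAt A L v S) (hv : L v = .fork) {w : V}
    (hwv : (w, v) ∈ A) (hw : L w = .fork) : ∃ u, (u, v) ∈ A ∧ L u = .fork ∧ (u, v) ∉ S := by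
  rcases h with ⟨hv', -⟩ | ⟨-, ⟨u, huv, hu, rfl⟩ | ⟨hno, -⟩⟩
  · simp_all
  · exact ⟨u, huv, hu, Finset.notMem_erase _ _⟩
  · exact absurd hw (hno w hwv)

end SatRuleAt

def arcAnchor (L : V → Label) (e : V × V) : V ⊕ V ⊕ (V × V) :=
  if L e.1 = .merge then .inl e.1 else if L e.2 = .fork then .inr (.inl e.2) else .inr (.inr e)

theorem FunnelLabeling.injOn_arcAnchor {C : Finset (V × V)} (hC : FunnelLabeling C L) :
    Set.InjOn (arcAnchor L) C := by
  rintro ⟨u, v⟩ huv ⟨u', v'⟩ huv' h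
  simp only [arcAnchor] at h
  split_ifs at h <;>
    simp only [Sum.inl.injEq, Sum.inr.injEq, Prod.mk.injEq, reduceCtorEq] at h
  · subst h
    rw [hC.eq_of_mem_of_merge ‹_› huv huv']
  · subst h
    rw [hC.eq_of_mem_of_fork ‹_› huv huv']
  · rw [h.1, h.2]

variable [Fintype V] {B : Finset (V × V)}

theorem SatRule.subset (hB : SatRule A L B) : B ⊆ A := by
  obtain ⟨f, hf, rfl⟩ := hB
  exact Finset.biUnion_subset.mpr fun v _ => (hf v).subset

theorem SatRuleAt.mem_biUnion_iff {f : V → Finset (V × V)} (hf : ∀ v, SatRuleAt A L v (f v))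
    {u w : V} :
    (u, w) ∈ Finset.univ.biUnion f ↔
      (L u = .merge ∧ (u, w) ∈ f u) ∨ (L w = .fork ∧ (u, w) ∈ f w) := by
  refine ⟨fun h => ?_, ?_⟩
  · obtain ⟨x, -, hx⟩ := Finset.mem_biUnion.mp h
    rcases (hf x).mem_incident hx with ⟨hL, rfl⟩ | ⟨hL, rfl⟩
    exacts [.inl ⟨hL, hx⟩, .inr ⟨hL, hx⟩]
  · rintro (⟨-, h⟩ | ⟨-, h⟩) <;> exact Finset.mem_biUnion.mpr ⟨_, Finset.mem_univ _, h⟩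

theorem SatRule.funnelLabeling_sdiff (hB : SatRule A L B) : FunnelLabeling (A \ B) L := by
  obtain ⟨f, hf, rfl⟩ := hB
  have hsub (v : V) : f v ⊆ Finset.univ.biUnion f :=
    Finset.subset_biUnion_of_mem f (Finset.mem_univ v)
  refine ⟨fun v hv => ?_, fun v hv => ?_, fun v u hvu ⟨hv, hu⟩ => ?_⟩
  · obtain ⟨u, -, hu⟩ := (hf v).in_eq_of_not_mem hv
    refine Finset.card_le_one.mpr ?_
    rintro ⟨w, _⟩ hw ⟨w', _⟩ hw'
    simp only [Finset.mem_filter, Finset.mem_sdiff] at hw hw'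
    obtain ⟨⟨hwA, hwB⟩, rfl⟩ := hw
    obtain ⟨⟨hwA', hwB'⟩, rfl⟩ := hw'
    rw [hu w hwA (fun h => hwB (hsub _ h)), hu w' hwA' (fun h => hwB' (hsub _ h))]
  · obtain ⟨u, -, hu⟩ := (hf v).out_eq_of_not_mem hv
    refine Finset.card_le_one.mpr ?_
    rintro ⟨_, w⟩ hw ⟨_, w'⟩ hw'
    simp only [Finset.mem_filter, Finset.mem_sdiff] at hw hw'
    obtain ⟨⟨hwA, hwB⟩, rfl⟩ := hw
    obtain ⟨⟨hwA', hwB'⟩, rfl⟩ := hw'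
    rw [hu w hwA (fun h => hwB (hsub _ h)), hu w' hwA' (fun h => hwB' (hsub _ h))]
  · obtain ⟨hvuA, hvuB⟩ := Finset.mem_sdiff.mp hvu
    obtain ⟨w, hw, hout⟩ := (hf v).out_eq_of_not_mem hv
    rw [hout u hvuA (fun h => hvuB (hsub _ h)), hw] at hu
    cases hu

theorem SatRule.image_arcAnchor_subset (hB : SatRule A L B) {C : Finset (V × V)} (hCA : C ⊆ A)
    (hC : FunnelLabeling C L) : C.image (arcAnchor L) ⊆ (A \ B).image (arcAnchor L) := by
  obtain ⟨f, hf, rfl⟩ := hB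
  intro _ he
  obtain ⟨⟨u, v⟩, huv, rfl⟩ := Finset.mem_image.mp he
  have huvA := hCA huv
  simp only [Finset.mem_image, Finset.mem_sdiff, SatRuleAt.mem_biUnion_iff hf, Prod.exists]
  cases hu : L u <;> cases hv : L v
  · obtain ⟨w, hwv, hw, hnot⟩ := (hf v).exists_in_not_mem hv huvA hu
    exact ⟨w, v, ⟨hwv, by simp [hw, hv, hnot]⟩, by simp [arcAnchor, hu, hv, hw]⟩
  · exact ⟨u, v, ⟨huvA, by simp [hu, hv]⟩, rfl⟩
  · exact absurd ⟨hu, hv⟩ (hC.2.2 u v huv)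
  · obtain ⟨w, huw, hw, hnot⟩ := (hf u).exists_out_not_mem hu huvA hv
    exact ⟨u, w, ⟨huw, by simp [hw, hu, hnot]⟩, by simp [arcAnchor, hu]⟩

theorem SatRule.card_le_card_sdiff (hB : SatRule A L B) {C : Finset (V × V)} (hCA : C ⊆ A)
    (hC : FunnelLabeling C L) : C.card ≤ (A \ B).card :=
  calc C.card = (C.image (arcAnchor L)).card := (Finset.card_image_of_injOn hC.injOn_arcAnchor).symm
    _ ≤ ((A \ B).image (arcAnchor L)).card := Finset.card_le_card (hB.image_arcAnchor_subset hCA hC)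
    _ ≤ (A \ B).card := Finset.card_image_le

end SatRule

theorem satRule_card_eq_opt_general (A A' : Finset (V × V))
    (hsub : A' ⊆ A)
    (hmin : ∀ B ⊆ A, IsFunnel (A \ B) → A'.card ≤ B.card)
    (L : V → Label) (hL : FunnelLabeling (A \ A') L)
    (B : Finset (V × V)) (hB : SatRule A L B) :
    B.card = A'.card := by
  have hBA : B ⊆ A := hB.subset
  have hle : A'.card ≤ B.card := hmin B hBA hB.funnelLabeling_sdiff.isFunnel
  have hge : (A \ A').card ≤ (A \ B).card := hB.card_le_card_sdiff Finset.sdiff_subset hL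
  rw [Finset.card_sdiff_of_subset hsub, Finset.card_sdiff_of_subset hBA] at hge
  have hBcard := Finset.card_le_card hBA
  omega

/-- If `A'` is a minimum-cardinality arc set such that `D - A'` is
a funnel and `L` is a funnel labeling of `D - A'`, then every arc set `B`
obtained from `D` and `L` by the satisfaction rule has `|B| = |A'|`. -/
theorem satRule_card_eq_opt (A A' : Finset (V × V)) (hdag : IsDAG A)
    (hsub : A' ⊆ A) (hfun : IsFunnel (A \ A'))
    (hmin : ∀ B ⊆ A, IsFunnel (A \ B) → A'.card ≤ B.card)
    (L : V → Label) (hL : FunnelLabeling (A \ A') L)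
    (B : Finset (V × V)) (hB : SatRule A L B) :
    B.card = A'.card :=
  satRule_card_eq_opt_general A A' hsub hmin L hL B hB
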